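/- arXiv:1901.08788 — 2 statements merged into one kernel-verified Lean document; each statement's English description precedes it below -/
import Mathlib

section
/- Fix η > 0, 0 ≤ μ ≤ γ_0 with μη ≤ 1 and γ_0 η ≤ 1. Define γ_k = (1 - δ_k) γ_{k-1} + δ_k μ with δ_k = √(η γ_k) ∈ (0,1), and Γ_k = ∏_{t=1}^k (1 - δ_t). Then for all k ≥ 0, Γ_k ≤ min((1 - √(μη))^k, 4/(2 + k√(γ_0 η))²). -/
/-!
Every δ_t = √(η γ_t) is at least √(μη) since γ_t ≥ μ, which gives the geometric bound.
For the other bound, γ_k - μ = Γ_k (γ_0 - μ) gives γ_k ≥ Γ_k γ_0, hence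
δ_{k+1} ≥ √(γ_0 η) √Γ_{k+1}. Since Γ_{k+1} = (1 - δ_{k+1}) Γ_k, this makes 1/√Γ_k grow
by at least √(γ_0 η)/2 per step, so 1/√Γ_k ≥ 1 + k √(γ_0 η)/2.
-/

open Finset

section OneSubProducts

variable {δ : ℕ → ℝ}

lemma prod_Icc_one_sub_pos (hδ : ∀ t ≥ 1, δ t < 1) (n : ℕ) :
    0 < ∏ t ∈ Icc 1 n, (1 - δ t) :=
  prod_pos fun t ht => sub_pos.mpr (hδ t (mem_Icc.mp ht).1)

lemma prod_Icc_one_sub_le_one (hδ : ∀ t ≥ 1, 0 ≤ δ t ∧ δ t < 1) (n : ℕ) :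
    ∏ t ∈ Icc 1 n, (1 - δ t) ≤ 1 :=
  prod_le_one (fun t ht => by linarith [hδ t (mem_Icc.mp ht).1])
    (fun t ht => by linarith [hδ t (mem_Icc.mp ht).1])

lemma prod_Icc_one_sub_succ (n : ℕ) :
    ∏ t ∈ Icc 1 (n + 1), (1 - δ t) = (∏ t ∈ Icc 1 n, (1 - δ t)) * (1 - δ (n + 1)) :=
  prod_Icc_succ_top (by omega) _

lemma prod_Icc_one_sub_le_pow {a : ℝ} (hδ : ∀ t ≥ 1, a ≤ δ t ∧ δ t ≤ 1) (n : ℕ) :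
    ∏ t ∈ Icc 1 n, (1 - δ t) ≤ (1 - a) ^ n := by
  have h := prod_le_prod (s := Icc 1 n) (f := fun t => 1 - δ t) (g := fun _ => 1 - a)
    (fun t ht => by linarith [hδ t (mem_Icc.mp ht).1])
    (fun t ht => by linarith [hδ t (mem_Icc.mp ht).1])
  simpa only [prod_const, Nat.card_Icc, add_tsub_cancel_right] using h

lemma sub_eq_prod_Icc_one_sub_mul {μ : ℝ} {γ : ℕ → ℝ}
    (hγrec : ∀ k ≥ 1, γ k = (1 - δ k) * γ (k - 1) + δ k * μ) (n : ℕ) :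
    γ n - μ = (∏ t ∈ Icc 1 n, (1 - δ t)) * (γ 0 - μ) := by
  induction n with
  | zero => simp
  | succ n ih =>
    rw [prod_Icc_one_sub_succ, hγrec (n + 1) (by omega), Nat.add_sub_cancel]
    linear_combination (1 - δ (n + 1)) * ih

end OneSubProducts

lemma inv_sqrt_add_half_le_inv_sqrt {a b c : ℝ} (hb : 0 < b) (hba : b ≤ a)
    (hc : c * √b ≤ (a - b) / a) : 1 / √a + c / 2 ≤ 1 / √b := by
  obtain ⟨x, hx, rfl⟩ : ∃ x, 0 ≤ x ∧ a = x ^ 2 :=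
    ⟨√a, Real.sqrt_nonneg a, (Real.sq_sqrt (hb.le.trans hba)).symm⟩
  obtain ⟨y, hy, rfl⟩ : ∃ y, 0 ≤ y ∧ b = y ^ 2 :=
    ⟨√b, Real.sqrt_nonneg b, (Real.sq_sqrt hb.le).symm⟩
  rw [Real.sqrt_sq hx, Real.sqrt_sq hy] at *
  have hy0 : 0 < y := lt_of_le_of_ne hy (by rintro rfl; simp at hb)
  have hyx : y ≤ x := (pow_le_pow_iff_left₀ hy hx two_ne_zero).mp hba
  have hx0 : 0 < x := hy0.trans_le hyx
  -- `(x² - y²)/x² ≤ 2 (x - y)/x`, i.e. `c/2 ≤ 1/y - 1/x`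
  have key : c * y * x ≤ 2 * (x - y) := by
    rw [le_div_iff₀ (by positivity)] at hc
    nlinarith [mul_le_mul_of_nonneg_left hyx (sub_nonneg.mpr hyx)]
  rw [div_add_div _ _ hx0.ne' two_ne_zero, div_le_div_iff₀ (by positivity) hy0]
  nlinarith

lemma le_four_div_sq_of_inv_sqrt_add_le {u : ℕ → ℝ} {c : ℝ} (hc : 0 ≤ c)
    (hpos : ∀ n, 0 < u n) (h0 : u 0 = 1)
    (hstep : ∀ n, 1 / √(u n) + c / 2 ≤ 1 / √(u (n + 1))) (n : ℕ) :
    u n ≤ 4 / (2 + n * c) ^ 2 := by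
  have hlow : 1 + n * c / 2 ≤ 1 / √(u n) := by
    induction n with
    | zero => simp [h0]
    | succ m ih =>
      push_cast
      linarith [hstep m]
  have hs : 0 < √(u n) := Real.sqrt_pos.mpr (hpos n)
  have hmul : (2 + n * c) * √(u n) ≤ 2 := by
    rw [le_div_iff₀ hs] at hlow
    linarith
  rw [← Real.sq_sqrt (hpos n).le, le_div_iff₀ (by positivity), ← mul_pow]
  nlinarith [mul_nonneg (by positivity : (0 : ℝ) ≤ 2 + n * c) hs.le]

theorem stmt9_general (η μ : ℝ) (γ δ : ℕ → ℝ) (hη : 0 < η) (hμ : 0 ≤ μ) (hμγ : μ ≤ γ 0)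
    (hδdef : ∀ k ≥ 1, δ k = Real.sqrt (η * γ k))
    (hγrec : ∀ k ≥ 1, γ k = (1 - δ k) * γ (k - 1) + δ k * μ)
    (hδ01 : ∀ k ≥ 1, 0 < δ k ∧ δ k < 1) (k : ℕ) :
    ∏ t ∈ Finset.Icc 1 k, (1 - δ t)
      ≤ min ((1 - Real.sqrt (μ * η)) ^ k)
            (4 / (2 + k * Real.sqrt (γ 0 * η)) ^ 2) := by
  set Γ : ℕ → ℝ := fun n => ∏ t ∈ Icc 1 n, (1 - δ t) with hΓ
  have hΓpos : ∀ n, 0 < Γ n := prod_Icc_one_sub_pos fun t ht => (hδ01 t ht).2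
  have hΓle : ∀ n, Γ n ≤ 1 :=
    prod_Icc_one_sub_le_one fun t ht => ⟨(hδ01 t ht).1.le, (hδ01 t ht).2⟩
  have hγ : ∀ n, γ n - μ = Γ n * (γ 0 - μ) := sub_eq_prod_Icc_one_sub_mul hγrec
  have hμγn : ∀ n, μ ≤ γ n := fun n => by nlinarith [hγ n, hΓpos n]
  have hΓγ : ∀ n, Γ n * γ 0 ≤ γ n := fun n => by nlinarith [hγ n, hΓle n]
  refine le_min (prod_Icc_one_sub_le_pow (fun t ht => ⟨?_, (hδ01 t ht).2.le⟩) k)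
    (le_four_div_sq_of_inv_sqrt_add_le (Real.sqrt_nonneg _) hΓpos (by simp [hΓ]) (fun n => ?_) k)
  · rw [hδdef t ht, mul_comm μ]
    exact Real.sqrt_le_sqrt (mul_le_mul_of_nonneg_left (hμγn t) hη.le)
  · have hsucc : Γ (n + 1) = Γ n * (1 - δ (n + 1)) := prod_Icc_one_sub_succ n
    refine inv_sqrt_add_half_le_inv_sqrt (hΓpos _) ?_ ?_
    · rw [hsucc]
      exact mul_le_of_le_one_right (hΓpos n).le (by linarith [hδ01 (n + 1) (by omega)])
    · have hratio : (Γ n - Γ (n + 1)) / Γ n = δ (n + 1) := by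
        rw [hsucc]
        field_simp [(hΓpos n).ne']
        ring
      rw [hratio, hδdef (n + 1) (by omega), ← Real.sqrt_mul' _ (hΓpos _).le]
      exact Real.sqrt_le_sqrt (by nlinarith [hΓγ (n + 1)])

theorem stmt9 (η μ : ℝ) (γ δ : ℕ → ℝ) (hη : 0 < η) (hμ : 0 ≤ μ) (hμγ : μ ≤ γ 0)
    (hμη : μ * η ≤ 1) (hγ0η : γ 0 * η ≤ 1)
    (hδdef : ∀ k ≥ 1, δ k = Real.sqrt (η * γ k))
    (hγrec : ∀ k ≥ 1, γ k = (1 - δ k) * γ (k - 1) + δ k * μ)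
    (hδ01 : ∀ k ≥ 1, 0 < δ k ∧ δ k < 1) (k : ℕ) :
    ∏ t ∈ Finset.Icc 1 k, (1 - δ t)
      ≤ min ((1 - Real.sqrt (μ * η)) ^ k)
            (4 / (2 + k * Real.sqrt (γ 0 * η)) ^ 2) :=
  stmt9_general η μ γ δ hη hμ hμγ hδdef hγrec hδ01 k
end

section
/- (Key relation for iteration A, deterministic case) Let f be convex, L-smooth, and μ-strongly convex (μ ≥ 0), ψ convex lower semicontinuous, F = f + ψ with minimizer x*. Let x_k = Prox_{η ψ}[x_{k-1} - η ∇f(x_{k-1})] with 0 < η ≤ 1/L. Define d_k(x) = (1-δ)d_{k-1}(x) + δ(f(x_{k-1}) + ⟨∇f(x_{k-1}), x - x_{k-1}⟩ + (μ/2)‖x - x_{k-1}‖² + ψ(x_k) + ⟨ψ'(x_k), x - x_k⟩), where ψ'(x_k) = (x_{k-1} - x_k)/η - ∇f(x_{k-1}), d_0(x) = d_0* + (γ_0/2)‖x - x_0‖², δ = ηγ with γ = (1-δ)γ_0 + μδ and γ_0 ≥ μ. Then x_k minimizes d_k, d_k(x) = d_k(x_k) + (γ/2)‖x - x_k‖²,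 and δ(F(x_k) - F*) + d_k(x*) - d_k(x_k) ≤ (1-δ)(d_{k-1}(x*) - d_{k-1}(x_{k-1})). -/
/-!
Three first-order inequalities drive the step: the descent lemma for the `L`-smooth `f` (between
`x_{k-1}` and `x_k`), the strong-convexity lower bound for `f` (between `x_{k-1}` and `x*`), and
the optimality condition of the proximal step, which says that `ψ'(x_k)` is a subgradient of `ψ`
at `x_k`. Summed with weights `η, η, 1` they give the classical proximal-gradient inequality
`η (F(x_k) - F(z)) + ‖z - x_k‖²/2 ≤ (1 - ημ) ‖z - x_{k-1}‖²/2` as soon as `ηL ≤ 1`.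
The model `d_k` is a quadratic of curvature `(1 - δ)γ₀ + δμ = γ` whose gradient vanishes at `x_k`
because `δ/η = γ`; so `d_k(x) - d_k(x_k) = γ‖x - x_k‖²/2`, and multiplying the proximal-gradient
inequality at `z = x*` by `γ` gives the last claim.
-/

open RealInnerProductSpace Set Filter Topology

section NormedSpace

variable {E : Type*} [NormedAddCommGroup E] [NormedSpace ℝ E]

theorem HasFDerivAt.hasDerivAt_comp_add_smul {f : E → ℝ} {f' : E →L[ℝ] ℝ} {x v : E} {t : ℝ}
    (hf : HasFDerivAt f f' (x + t • v)) :
    HasDerivAt (fun s : ℝ => f (x + s • v)) (f' v) t := by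
  have hline : HasDerivAt (fun s : ℝ => x + s • v) v t :=
    ((hasDerivAt_id t).smul_const v).const_add x |>.congr_deriv (one_smul ℝ v)
  simpa [Function.comp_def] using hf.comp_hasDerivAt t hline

theorem ConvexOn.add_le_of_hasFDerivAt {φ : E → ℝ} {φ' : E →L[ℝ] ℝ} {x : E}
    (hφ : ConvexOn ℝ univ φ) (hφ' : HasFDerivAt φ φ' x) (y : E) :
    φ x + φ' (y - x) ≤ φ y := by
  have hline : ConvexOn ℝ univ (fun t : ℝ => φ (x + t • (y - x))) := by
    simpa [Function.comp_def, AffineMap.lineMap_apply_module', add_comm] using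
      hφ.comp_affineMap (AffineMap.lineMap x y)
  have hderiv : HasDerivAt (fun t : ℝ => φ (x + t • (y - x))) (φ' (y - x)) 0 :=
    HasFDerivAt.hasDerivAt_comp_add_smul (by simpa using hφ')
  have := hline.le_slope_of_hasDerivAt (mem_univ 0) (mem_univ 1) zero_lt_one hderiv
  simp only [slope_def_field, zero_smul, one_smul, add_zero, sub_zero, div_one,
    add_sub_cancel] at this
  linarith

theorem ConvexOn.isMinOn_of_forall_sub_mul_norm_sub_sq_le {φ : E → ℝ} {x : E} {c : ℝ}
    (hφ : ConvexOn ℝ univ φ) (h : ∀ w, φ x - c * ‖w - x‖ ^ 2 ≤ φ w) : IsMinOn φ univ x := by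
  intro z _
  set C := ‖z - x‖ ^ 2
  have hbound : ∀ t ∈ Ioc (0 : ℝ) 1, φ x - c * C * t ≤ φ z := by
    rintro t ⟨ht0, ht1⟩
    have hconv := hφ.2 (mem_univ x) (mem_univ z) (sub_nonneg.2 ht1) ht0.le (sub_add_cancel 1 t)
    have hlow := h ((1 - t) • x + t • z)
    rw [show (1 - t) • x + t • z - x = t • (z - x) by module, norm_smul, mul_pow,
      Real.norm_eq_abs, sq_abs] at hlow
    simp only [smul_eq_mul] at hconv
    have : t * (φ x - c * C * t) ≤ t * φ z := by nlinarith
    exact le_of_mul_le_mul_left this ht0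
  have hlim : Tendsto (fun t => φ x - c * C * t) (𝓝[>] 0) (𝓝 (φ x)) := by
    have : Continuous (fun t : ℝ => φ x - c * C * t) := by fun_prop
    simpa using (this.tendsto 0).mono_left nhdsWithin_le_nhds
  exact le_of_tendsto hlim (eventually_of_mem (Ioc_mem_nhdsGT zero_lt_one) hbound)

end NormedSpace

section InnerProductSpace

variable {E : Type*} [NormedAddCommGroup E] [InnerProductSpace ℝ E]

theorem ConvexOn.add_inner_sub_le_of_isMinOn_add_norm_sub_sq {h : E → ℝ} {u x : E}
    (hh : ConvexOn ℝ univ h) (hx : IsMinOn (fun w => h w + ‖w - u‖ ^ 2 / 2) univ x) (z : E) :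
    h x + ⟪u - x, z - x⟫ ≤ h z := by
  have hconv : ConvexOn ℝ univ (fun w => h w - ⟪u - x, w⟫) :=
    hh.sub ((innerₛₗ ℝ (u - x)).concaveOn convex_univ)
  have hmin := hconv.isMinOn_of_forall_sub_mul_norm_sub_sq_le (x := x) (c := 1 / 2) fun w => by
    have hw := isMinOn_univ_iff.1 hx w
    have hexp : ‖w - u‖ ^ 2 = ‖w - x‖ ^ 2 - 2 * ⟪u - x, w - x⟫ + ‖x - u‖ ^ 2 := by
      rw [show w - u = (w - x) - (u - x) by abel, norm_sub_sq_real, real_inner_comm,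
        ← norm_neg (u - x), neg_sub]
    rw [hexp, inner_sub_right] at hw
    linarith
  have := isMinOn_univ_iff.1 hmin z
  rw [inner_sub_right]
  linarith

theorem estimateSequence_eq_add_norm_sub_sq {x₀ x₁ g : E} {d a b γ₀ μ δ η γ : ℝ} (hη : η ≠ 0)
    (hγ : γ = (1 - δ) * γ₀ + μ * δ) (hδ : δ = η * γ) (x : E) :
    let q : E → ℝ := fun x => (1 - δ) * (d + γ₀ / 2 * ‖x - x₀‖ ^ 2) +
      δ * (a + ⟪g, x - x₀⟫ + μ / 2 * ‖x - x₀‖ ^ 2 + b + ⟪(1 / η) • (x₀ - x₁) - g, x - x₁⟫)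
    q x = q x₁ + γ / 2 * ‖x - x₁‖ ^ 2 := by
  intro q
  have hsplit : x - x₀ = (x - x₁) + (x₁ - x₀) := by abel
  have hnorm : ‖x - x₀‖ ^ 2 = ‖x - x₁‖ ^ 2 + 2 * ⟪x - x₁, x₁ - x₀⟫ + ‖x₁ - x₀‖ ^ 2 := by
    rw [hsplit, norm_add_sq_real]
  have hlin : ⟪g, x - x₀⟫ = ⟪g, x - x₁⟫ + ⟪g, x₁ - x₀⟫ := by rw [hsplit, inner_add_right]
  have hsub : ⟪(1 / η) • (x₀ - x₁) - g, x - x₁⟫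
      = -(1 / η) * ⟪x - x₁, x₁ - x₀⟫ - ⟪g, x - x₁⟫ := by
    rw [inner_sub_left, real_inner_smul_left, real_inner_comm, ← neg_sub x₁ x₀, inner_neg_right]
    ring
  simp only [q, sub_self, inner_zero_right]
  rw [hnorm, hlin, hsub]
  field_simp
  linear_combination (-η * ‖x - x₁‖ ^ 2 - 2 * η * ⟪x - x₁, x₁ - x₀⟫) * hγ
    - 2 * ⟪x - x₁, x₁ - x₀⟫ * hδ

variable [CompleteSpace E]

theorem StrongConvexOn.add_inner_add_le_of_hasGradientAt {f : E → ℝ} {g x : E} {μ : ℝ}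
    (hf : StrongConvexOn univ μ f) (hg : HasGradientAt f g x) (y : E) :
    f x + ⟪g, y - x⟫ + μ / 2 * ‖y - x‖ ^ 2 ≤ f y := by
  have h := (strongConvexOn_iff_convex.1 hf).add_le_of_hasFDerivAt
    (hg.hasFDerivAt.sub ((hasStrictFDerivAt_norm_sq x).hasFDerivAt.const_mul (μ / 2))) y
  have hy : ‖y‖ ^ 2 = ‖x‖ ^ 2 + 2 * ⟪x, y - x⟫ + ‖y - x‖ ^ 2 := by
    rw [← norm_add_sq_real, add_sub_cancel]
  simp only [sub_apply, smul_apply, InnerProductSpace.toDual_apply_apply, innerSL_apply_apply,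
    nsmul_eq_mul, Nat.cast_ofNat, smul_eq_mul] at h
  rw [hy] at h
  linarith

theorem LipschitzWith.le_add_inner_add_of_hasGradientAt {f : E → ℝ} {f' : E → E} {K : NNReal}
    (hK : LipschitzWith K f') (hf : ∀ x, HasGradientAt f (f' x) x) (x y : E) :
    f y ≤ f x + ⟪f' x, y - x⟫ + K / 2 * ‖y - x‖ ^ 2 := by
  set v := y - x
  let φ : ℝ → ℝ := fun t => f (x + t • v) - t * ⟪f' x, v⟫ - K / 2 * ‖v‖ ^ 2 * t ^ 2
  have hφ : ∀ t, HasDerivAt φ (⟪f' (x + t • v) - f' x, v⟫ - K * ‖v‖ ^ 2 * t) t := by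
    intro t
    have hline : HasDerivAt (fun s : ℝ => f (x + s • v)) ⟪f' (x + t • v), v⟫ t := by
      simpa using (hf (x + t • v)).hasFDerivAt.hasDerivAt_comp_add_smul
    refine ((hline.sub ((hasDerivAt_id t).mul_const ⟪f' x, v⟫)).sub
      ((hasDerivAt_pow 2 t).const_mul (K / 2 * ‖v‖ ^ 2))).congr_deriv ?_
    rw [inner_sub_left]
    ring
  have hanti : AntitoneOn φ (Ici 0) := by
    refine antitoneOn_of_hasDerivWithinAt_nonpos (convex_Ici 0)
      (fun t _ => (hφ t).continuousAt.continuousWithinAt) (fun t _ => (hφ t).hasDerivWithinAt) ?_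
    intro t ht
    rw [interior_Ici] at ht
    have hlip : ‖f' (x + t • v) - f' x‖ ≤ K * (t * ‖v‖) := by
      simpa [dist_eq_norm, norm_smul, abs_of_pos (mem_Ioi.1 ht)] using
        hK.dist_le_mul (x + t • v) x
    calc ⟪f' (x + t • v) - f' x, v⟫ - K * ‖v‖ ^ 2 * t
        ≤ ‖f' (x + t • v) - f' x‖ * ‖v‖ - K * ‖v‖ ^ 2 * t := by
          gcongr; exact real_inner_le_norm _ _
      _ ≤ K * (t * ‖v‖) * ‖v‖ - K * ‖v‖ ^ 2 * t := by gcongr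
      _ = 0 := by ring
  have := hanti (mem_Ici.2 le_rfl) (mem_Ici.2 zero_le_one) zero_le_one
  simp only [φ, v, zero_smul, one_smul, add_zero, add_sub_cancel, zero_mul, one_mul, mul_one,
    sub_zero, one_pow, ne_eq, OfNat.ofNat_ne_zero, not_false_eq_true, zero_pow, mul_zero,
    tsub_le_iff_right] at this
  linarith

theorem proxGrad_fundamental_inequality {f ψ : E → ℝ} {f' : E → E} {K : NNReal}
    {μ η : ℝ} {x₀ x₁ : E} (hf : ∀ x, HasGradientAt f (f' x) x) (hK : LipschitzWith K f')
    (hsc : StrongConvexOn univ μ f) (hψ : ConvexOn ℝ univ ψ) (hη : 0 < η) (hηK : η * K ≤ 1)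
    (hx₁ : IsMinOn (fun w => η * ψ w + ‖w - (x₀ - η • f' x₀)‖ ^ 2 / 2) univ x₁) (z : E) :
    η * (f x₁ + ψ x₁ - (f z + ψ z)) + ‖z - x₁‖ ^ 2 / 2 ≤ (1 - η * μ) / 2 * ‖z - x₀‖ ^ 2 := by
  have hdesc := hK.le_add_inner_add_of_hasGradientAt hf x₀ x₁
  have hstrong := hsc.add_inner_add_le_of_hasGradientAt (hf x₀) z
  have hsub := (hψ.smul hη.le).add_inner_sub_le_of_isMinOn_add_norm_sub_sq
    (h := fun w => η * ψ w) hx₁ z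
  have hnorm : ‖z - x₀‖ ^ 2 = ‖z - x₁‖ ^ 2 + 2 * ⟪z - x₁, x₁ - x₀⟫ + ‖x₁ - x₀‖ ^ 2 := by
    rw [← norm_add_sq_real, sub_add_sub_cancel]
  have hlin : ⟪f' x₀, z - x₀⟫ = ⟪f' x₀, z - x₁⟫ + ⟪f' x₀, x₁ - x₀⟫ := by
    rw [← inner_add_right, sub_add_sub_cancel]
  have hstep : ⟪x₀ - η • f' x₀ - x₁, z - x₁⟫ = -⟪z - x₁, x₁ - x₀⟫ - η * ⟪f' x₀, z - x₁⟫ := by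
    rw [sub_right_comm, inner_sub_left, real_inner_smul_left, real_inner_comm, ← neg_sub x₁ x₀,
      inner_neg_right]
  rw [hlin] at hstrong
  rw [hstep] at hsub
  rw [hnorm] at hstrong ⊢
  linear_combination η * hdesc + η * hstrong + hsub + ‖x₁ - x₀‖ ^ 2 / 2 * hηK

end InnerProductSpace

theorem stmt13_general {p : ℕ}
    (f ψ : EuclideanSpace ℝ (Fin p) → ℝ)
    (f' : EuclideanSpace ℝ (Fin p) → EuclideanSpace ℝ (Fin p))
    (L μ γ0 γ δ η d0star : ℝ)
    (xkm1 xk xstar : EuclideanSpace ℝ (Fin p))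
    (hf : ∀ x, HasGradientAt f (f' x) x)
    (hlip : LipschitzWith L.toNNReal f')
    (hsc : ConvexOn ℝ Set.univ (fun x => f x - μ / 2 * ‖x‖ ^ 2))
    (hψ : ConvexOn ℝ Set.univ ψ)
    (hη : 0 < η) (hηL : η ≤ 1 / L)
    (hγ : γ = (1 - δ) * γ0 + μ * δ)
    (hδdef : δ = η * γ) (hδ0 : 0 < δ)
    (hprox : ∀ z, η * ψ xk + ‖xk - (xkm1 - η • f' xkm1)‖ ^ 2 / 2
        ≤ η * ψ z + ‖z - (xkm1 - η • f' xkm1)‖ ^ 2 / 2) :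
    let ψ'k := (1 / η) • (xkm1 - xk) - f' xkm1
    let d0 : EuclideanSpace ℝ (Fin p) → ℝ := fun x => d0star + γ0 / 2 * ‖x - xkm1‖ ^ 2
    let dk : EuclideanSpace ℝ (Fin p) → ℝ := fun x =>
      (1 - δ) * d0 x +
        δ * (f xkm1 + ⟪f' xkm1, x - xkm1⟫ + μ / 2 * ‖x - xkm1‖ ^ 2
              + ψ xk + ⟪ψ'k, x - xk⟫)
    (∀ x, dk xk ≤ dk x) ∧
    (∀ x, dk x = dk xk + γ / 2 * ‖x - xk‖ ^ 2) ∧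
    δ * (f xk + ψ xk - (f xstar + ψ xstar)) + dk xstar - dk xk
      ≤ (1 - δ) * (d0 xstar - d0 xkm1) := by
  intro ψ'k d0 dk
  have hL : 0 < L := by
    by_contra! hL
    linarith [one_div_nonpos.2 hL]
  have hγ_pos : 0 < γ := pos_of_mul_pos_right (hδdef ▸ hδ0) hη.le
  have hquad : ∀ x, dk x = dk xk + γ / 2 * ‖x - xk‖ ^ 2 :=
    estimateSequence_eq_add_norm_sub_sq hη.ne' hγ hδdef
  refine ⟨fun x => by rw [hquad x]; exact le_add_of_nonneg_right (by positivity), hquad, ?_⟩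
  have hηL' : η * L.toNNReal ≤ 1 := by
    rw [Real.coe_toNNReal _ hL.le]
    exact (le_div_iff₀ hL).1 hηL
  have hkey := proxGrad_fundamental_inequality hf hlip (strongConvexOn_iff_convex.2 hsc) hψ hη
    hηL' (fun z _ => hprox z) xstar
  rw [hquad xstar]
  simp only [d0, sub_self, norm_zero]
  linear_combination γ * hkey + ‖xstar - xkm1‖ ^ 2 / 2 * hγ
    + (f xk + ψ xk - (f xstar + ψ xstar) + μ / 2 * ‖xstar - xkm1‖ ^ 2) * hδdef

theorem stmt13 {p : ℕ}
    (f ψ : EuclideanSpace ℝ (Fin p) → ℝ)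
    (f' : EuclideanSpace ℝ (Fin p) → EuclideanSpace ℝ (Fin p))
    (L μ γ0 γ δ η d0star : ℝ)
    (xkm1 xk xstar : EuclideanSpace ℝ (Fin p))
    (hf : ∀ x, HasGradientAt f (f' x) x)
    (hL0 : 0 ≤ L) (hlip : LipschitzWith L.toNNReal f')
    (hμ : 0 ≤ μ)
    (hsc : ConvexOn ℝ Set.univ (fun x => f x - μ / 2 * ‖x‖ ^ 2))
    (hψ : ConvexOn ℝ Set.univ ψ)
    (hmin : ∀ x, f xstar + ψ xstar ≤ f x + ψ x)
    (hη : 0 < η) (hηL : η ≤ 1 / L)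
    (hγ0 : μ ≤ γ0)
    (hγ : γ = (1 - δ) * γ0 + μ * δ)
    (hδdef : δ = η * γ) (hδ0 : 0 < δ) (hδ1 : δ ≤ 1)
    (hprox : ∀ z, η * ψ xk + ‖xk - (xkm1 - η • f' xkm1)‖ ^ 2 / 2
        ≤ η * ψ z + ‖z - (xkm1 - η • f' xkm1)‖ ^ 2 / 2) :
    let ψ'k := (1 / η) • (xkm1 - xk) - f' xkm1
    let d0 : EuclideanSpace ℝ (Fin p) → ℝ := fun x => d0star + γ0 / 2 * ‖x - xkm1‖ ^ 2
    let dk : EuclideanSpace ℝ (Fin p) → ℝ := fun x =>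
      (1 - δ) * d0 x +
        δ * (f xkm1 + ⟪f' xkm1, x - xkm1⟫ + μ / 2 * ‖x - xkm1‖ ^ 2
              + ψ xk + ⟪ψ'k, x - xk⟫)
    (∀ x, dk xk ≤ dk x) ∧
    (∀ x, dk x = dk xk + γ / 2 * ‖x - xk‖ ^ 2) ∧
    δ * (f xk + ψ xk - (f xstar + ψ xstar)) + dk xstar - dk xk
      ≤ (1 - δ) * (d0 xstar - d0 xkm1) :=
  stmt13_general f ψ f' L μ γ0 γ δ η d0star xkm1 xk xstar hf hlip hsc hψ hη hηL hγ hδdef hδ0 hprox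
end
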